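/- arXiv:2507.22507 — 2 statements merged into one kernel-verified Lean document; each statement's English description precedes it below -/
import Mathlib

section
/- Let T be a spherically homogeneous rooted tree, let G ≤ Aut T be a weakly branch group, let B be a nontrivial basal subgroup of G, and let v be a vertex of T moved by B (i.e. v^b ≠ v for some b ∈ B). Then st_G(v) ≤ N_G(B) and rist_G(v) ∩ B ≠ 1. -/
open Equiv

/-- Vertices of the spherically homogeneous rooted tree of type `m`: finite sequences
`(v_0, …, v_{n−1})` with `v_i ∈ Fin (m i)`. -/
def Vertex (m : ℕ → ℕ) : Type := (n : ℕ) × (∀ i : Fin n, Fin (m i))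

/-- `u` is a prefix of `v` (i.e. `u` is an ancestor of `v`, or `u = v`). -/
def IsPrefixV {m : ℕ → ℕ} (u v : Vertex m) : Prop :=
  u.1 ≤ v.1 ∧ ∀ (i : ℕ) (hu : i < u.1) (hv : i < v.1), (u.2 ⟨i, hu⟩ : ℕ) = (v.2 ⟨i, hv⟩ : ℕ)

/-- The automorphism group `Aut T` of the tree: the permutations of the vertex set which
preserve the length (level) and the prefix relation. -/
def treeAut (m : ℕ → ℕ) : Subgroup (Perm (Vertex m)) where
  carrier := {f | (∀ v, (f v).1 = v.1) ∧ ∀ u v, IsPrefixV u v ↔ IsPrefixV (f u) (f v)}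
  one_mem' := ⟨fun _ => rfl, fun _ _ => by simp⟩
  mul_mem' := by
    rintro f g ⟨hf1, hf2⟩ ⟨hg1, hg2⟩
    refine ⟨fun v => ?_, fun u v => ?_⟩
    · rw [Perm.mul_apply, hf1, hg1]
    · rw [Perm.mul_apply, Perm.mul_apply, ← hf2, ← hg2]
  inv_mem' := by
    rintro f ⟨hf1, hf2⟩
    refine ⟨fun v => ?_, fun u v => ?_⟩
    · have h := hf1 (f⁻¹ v)
      rw [← Perm.mul_apply, mul_inv_cancel, Perm.one_apply] at h
      exact h.symm
    · have h := hf2 (f⁻¹ u) (f⁻¹ v)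
      simp only [← Perm.mul_apply, mul_inv_cancel, Perm.one_apply] at h
      exact h.symm

variable {m : ℕ → ℕ}

/-- The stabilizer `st_G(v)` of a vertex `v` in `G`. -/
def st (G : Subgroup (Perm (Vertex m))) (v : Vertex m) : Subgroup (Perm (Vertex m)) :=
  G ⊓ MulAction.stabilizer (Perm (Vertex m)) v

/-- The rigid vertex stabilizer `rist_G(v)`: elements of `G` fixing every vertex that does not
have `v` as a prefix. -/
def rist (G : Subgroup (Perm (Vertex m))) (v : Vertex m) : Subgroup (Perm (Vertex m)) :=
  G ⊓ fixingSubgroup (Perm (Vertex m)) {u | ¬ IsPrefixV v u}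

/-- The level stabilizer `St_G(n)`: the pointwise stabilizer in `G` of all vertices of length
`n`. -/
def StL (G : Subgroup (Perm (Vertex m))) (n : ℕ) : Subgroup (Perm (Vertex m)) :=
  G ⊓ fixingSubgroup (Perm (Vertex m)) {u : Vertex m | u.1 = n}

/-- `G` acts transitively on every level of the tree. -/
def LevelTransitive (G : Subgroup (Perm (Vertex m))) : Prop :=
  ∀ u v : Vertex m, u.1 = v.1 → ∃ g ∈ G, g u = v

/-- `G` is weakly branch: level-transitive with all rigid vertex stabilizers infinite. -/
def IsWeaklyBranch (G : Subgroup (Perm (Vertex m))) : Prop :=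
  LevelTransitive G ∧ ∀ v : Vertex m, Infinite (rist G v)

/-- The conjugate subgroup `g B g⁻¹`. -/
def conjS {Γ : Type*} [Group Γ] (g : Γ) (B : Subgroup Γ) : Subgroup Γ :=
  Subgroup.map (MulAut.conj g).toMonoidHom B

/-- A weakly branch action of a group `G` on the tree of type `m`: an injective homomorphism
into `Aut T` whose image is weakly branch. -/
def IsWBAction {G : Type*} [Group G] (m : ℕ → ℕ) (ρ : G →* Perm (Vertex m)) : Prop :=
  Function.Injective ρ ∧ ρ.range ≤ treeAut m ∧ IsWeaklyBranch ρ.range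

/-- `G` is `T`-rigid: it admits a weakly branch action on `T` and the images of any two weakly
branch actions are conjugate in `Aut T`. -/
def TRigid (G : Type*) [Group G] (m : ℕ → ℕ) : Prop :=
  (∃ ρ : G →* Perm (Vertex m), IsWBAction m ρ) ∧
  ∀ ρ τ : G →* Perm (Vertex m), IsWBAction m ρ → IsWBAction m τ →
    ∃ f ∈ treeAut m, τ.range = conjS f ρ.range

/-- `st_ρ(v) = ρ⁻¹(st_{ρ(G)}(v))`. -/
def stA {G : Type*} [Group G] (ρ : G →* Perm (Vertex m)) (v : Vertex m) : Subgroup G :=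
  Subgroup.comap ρ (st ρ.range v)

/-- `rist_ρ(v) = ρ⁻¹(rist_{ρ(G)}(v))`. -/
def ristA {G : Type*} [Group G] (ρ : G →* Perm (Vertex m)) (v : Vertex m) : Subgroup G :=
  Subgroup.comap ρ (rist ρ.range v)

/-- A subgroup `B` of a group `Γ` is basal if it has finitely many conjugates and its normal
closure is the internal direct product of its distinct conjugates: distinct conjugates commute
elementwise, each distinct conjugate intersects the subgroup generated by the remaining ones
trivially, and the conjugates together generate the normal closure. -/
def IsBasal {Γ : Type*} [Group Γ] (B : Subgroup Γ) : Prop :=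
  (Set.range fun g : Γ => conjS g B).Finite ∧
  (∀ g h : Γ, conjS g B ≠ conjS h B → ∀ x ∈ conjS g B, ∀ y ∈ conjS h B, Commute x y) ∧
  (∀ g : Γ, conjS g B ⊓ (⨆ h ∈ {h : Γ | conjS h B ≠ conjS g B}, conjS h B) = ⊥) ∧
  (⨆ g : Γ, conjS g B) = Subgroup.normalClosure (B : Set Γ)

theorem Equiv.Perm.apply_inv_self {α : Type*} (f : Perm α) (x : α) : f (f⁻¹ x) = x :=
  f.apply_symm_apply x

theorem Equiv.Perm.inv_apply_self {α : Type*} (f : Perm α) (x : α) : f⁻¹ (f x) = x :=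
  f.symm_apply_apply x

section Aux
variable {m : ℕ → ℕ}

lemma vext (u v : Vertex m) (h1 : u.1 = v.1)
    (h2 : ∀ (i : ℕ) (hu : i < u.1) (hv : i < v.1), (u.2 ⟨i, hu⟩ : ℕ) = (v.2 ⟨i, hv⟩ : ℕ)) :
    u = v := by
  obtain ⟨n, f⟩ := u
  obtain ⟨k, g⟩ := v
  dsimp at h1
  subst h1
  have : f = g := by
    funext i
    exact Fin.ext (h2 i i.2 i.2)
  rw [this]

lemma prefix_rfl (v : Vertex m) : IsPrefixV v v := ⟨le_rfl, fun _ _ _ => rfl⟩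

lemma prefix_trans {u v w : Vertex m} (h1 : IsPrefixV u v) (h2 : IsPrefixV v w) :
    IsPrefixV u w :=
  ⟨h1.1.trans h2.1, fun i hu hw => (h1.2 i hu (hu.trans_le h1.1)).trans (h2.2 i _ hw)⟩

lemma prefix_eq {u v : Vertex m} (h : IsPrefixV u v) (h1 : u.1 = v.1) : u = v :=
  vext u v h1 h.2

lemma prefix_antichain {u w x : Vertex m} (h1 : u.1 = w.1) (h2 : IsPrefixV u x)
    (h3 : IsPrefixV w x) : u = w := by
  refine vext u w h1 (fun i hu hw => ?_)
  rw [h2.2 i hu (hu.trans_le h2.1), h3.2 i hw (hw.trans_le h3.1)]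

end Aux
section ConjAux
variable {Γ : Type*} [Group Γ] {B : Subgroup Γ}

lemma mem_conjS {g x : Γ} : x ∈ conjS g B ↔ g⁻¹ * x * g ∈ B := by
  unfold conjS
  rw [Subgroup.mem_map]
  constructor
  · rintro ⟨y, hy, rfl⟩
    simpa [MulAut.conj_apply, mul_assoc] using hy
  · intro h
    exact ⟨g⁻¹ * x * g, h, by simp [MulAut.conj_apply, mul_assoc]⟩

lemma conjS_one : conjS (1 : Γ) B = B := by
  ext x; simp [mem_conjS]

lemma mem_normalizer_of_conjS_eq {g : Γ} (h : conjS g B = B) : g ∈ Subgroup.normalizer (B : Set Γ) := by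
  rw [Subgroup.mem_normalizer_iff]
  intro x
  constructor
  · intro hx
    rw [← h, mem_conjS]
    have e : g⁻¹ * (g * x * g⁻¹) * g = x := by group
    rwa [e]
  · intro hx
    rw [← h, mem_conjS] at hx
    have e : g⁻¹ * (g * x * g⁻¹) * g = x := by group
    rwa [e] at hx

lemma normalizer_of_conjS_eq_conjS {x y : Γ} (h : conjS x B = conjS y B) :
    x⁻¹ * y ∈ Subgroup.normalizer (B : Set Γ) := by
  apply mem_normalizer_of_conjS_eq
  ext z
  rw [mem_conjS]
  have e1 : (x⁻¹ * y)⁻¹ * z * (x⁻¹ * y) = y⁻¹ * (x * z * x⁻¹) * y := by group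
  rw [e1, ← mem_conjS (g := y), ← h, mem_conjS]
  have e2 : x⁻¹ * (x * z * x⁻¹) * x = z := by group
  rw [e2]

lemma exists_mem_inf_normalizer (hfin : (Set.range fun g : Γ => conjS g B).Finite)
    (H : Subgroup Γ) (hH : Infinite H) :
    ∃ z : Γ, z ∈ H ∧ z ∈ Subgroup.normalizer (B : Set Γ) ∧ z ≠ 1 := by
  haveI := hfin.to_subtype
  have := Finite.exists_ne_map_eq_of_infinite
    (fun h : H => (⟨conjS (h : Γ) B, Set.mem_range_self _⟩ : (Set.range fun g : Γ => conjS g B)))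
  obtain ⟨x, y, hxy, hconj⟩ := this
  refine ⟨(x : Γ)⁻¹ * y, mul_mem (inv_mem x.2) y.2, ?_, ?_⟩
  · exact normalizer_of_conjS_eq_conjS (by simpa using hconj)
  · intro h
    apply hxy
    have : (x : Γ) = y := by
      have := congrArg (fun t => (x : Γ) * t) h
      simpa [mul_assoc] using this.symm
    exact Subtype.ext this

end ConjAux
section TreeAux
variable {m : ℕ → ℕ}

/-- An automorphism fixing everything outside the subtree at `v` fixes `v`. -/
lemma fixes_vertex {f : Perm (Vertex m)} {v : Vertex m} (hf : f ∈ treeAut m)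
    (hfix : ∀ y, ¬ IsPrefixV v y → f y = y) : f v = v := by
  by_cases h : IsPrefixV v (f v)
  · exact (prefix_eq h (hf.1 v).symm).symm
  · exact f.injective (hfix (f v) h)

/-- An automorphism fixing `v` maps the subtree at `v` into itself. -/
lemma maps_subtree {f : Perm (Vertex m)} {v x : Vertex m} (hf : f ∈ treeAut m)
    (hv : f v = v) (hx : IsPrefixV v x) : IsPrefixV v (f x) := by
  have := (hf.2 v x).mp hx
  rwa [hv] at this

/-- Conjugation moves supports. -/
lemma conj_support {f σ : Perm (Vertex m)} {u : Vertex m} (hf : f ∈ treeAut m)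
    (hσ : ∀ y, ¬ IsPrefixV u y → σ y = y) :
    ∀ y, ¬ IsPrefixV (f u) y → (f * σ * f⁻¹) y = y := by
  intro y hy
  have h1 : ¬ IsPrefixV u (f⁻¹ y) := by
    intro h
    have := (hf.2 u (f⁻¹ y)).mp h
    rw [Perm.apply_inv_self] at this
    exact hy this
  simp only [Perm.mul_apply]
  rw [hσ _ h1, Perm.apply_inv_self]

end TreeAux
section Main
variable {m : ℕ → ℕ}

lemma rist_fix {G : Subgroup (Perm (Vertex m))} {w : Vertex m} {f : Perm (Vertex m)}
    (hf : f ∈ rist G w) : ∀ y, ¬ IsPrefixV w y → f y = y := by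
  intro y hy
  have h2 := (Subgroup.mem_inf.mp hf).2
  exact (mem_fixingSubgroup_iff (Perm (Vertex m))).mp h2 y hy

lemma exists_basal_rist (G : Subgroup (Perm (Vertex m))) (hG : G ≤ treeAut m)
    (hwb : IsWeaklyBranch G) (B : Subgroup ↥G)
    (hBfin : (Set.range fun g : ↥G => conjS g B).Finite)
    (v : Vertex m) (b : ↥G) (hbB : b ∈ B) (hbv : (b : Perm (Vertex m)) v ≠ v) :
    ∃ d : ↥G, d ∈ B ∧ ((d : Perm (Vertex m)) ∈ rist G v) ∧ d ≠ 1 := by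
  have hinf : ∀ w : Vertex m, Infinite ((rist G w).subgroupOf G) := by
    intro w
    haveI := hwb.2 w
    exact Infinite.of_injective _
      ((Subgroup.subgroupOfEquivOfLe (H := rist G w) (K := G) inf_le_left).symm.toEquiv).injective
  -- the element r
  obtain ⟨z, hzH, hzN, hzne⟩ := exists_mem_inf_normalizer hBfin _ (hinf v)
  have hzr : (z : Perm (Vertex m)) ∈ rist G v := Subgroup.mem_subgroupOf.mp hzH
  set r := (z : Perm (Vertex m)) with hr
  have hrfix : ∀ y, ¬ IsPrefixV v y → r y = y := rist_fix hzr
  have hrG : r ∈ G := z.2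
  have hrv : r v = v := fixes_vertex (hG hrG) hrfix
  have hrinvv : r⁻¹ v = v := by
    conv_lhs => rw [← hrv]
    rw [Perm.inv_apply_self]
  have hrne : r ≠ 1 := fun h => hzne (Subtype.ext h)
  obtain ⟨u, hu⟩ : ∃ u, r u ≠ u := by
    by_contra h; push_neg at h; exact hrne (Equiv.ext h)
  have hvu : IsPrefixV v u := by
    by_contra h; exact hu (hrfix u h)
  -- data about b
  set bp := (b : Perm (Vertex m)) with hbp
  have hbG : bp ∈ G := b.2
  have hbiG : bp⁻¹ ∈ G := inv_mem hbG
  set w' := bp⁻¹ v with hw'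
  have hw'v : w' ≠ v := by
    intro h
    have := congrArg bp h
    rw [hw', Perm.apply_inv_self] at this
    exact hbv this.symm
  have hw'len : w'.1 = v.1 := (hG hbiG).1 v
  -- s₁ and c
  have hrifix : ∀ y, ¬ IsPrefixV v y → r⁻¹ y = y := by
    intro y hy
    conv_lhs => rw [← hrfix y hy]
    rw [Perm.inv_apply_self]
  set s₁ : Perm (Vertex m) := bp⁻¹ * r⁻¹ * bp with hs₁def
  have hs₁fix : ∀ y, ¬ IsPrefixV w' y → s₁ y = y := by
    have h := conj_support (hG hbiG) hrifix
    simpa [inv_inv, hs₁def, hw'] using h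
  set c : ↥G := b⁻¹ * (z⁻¹ * b * z) with hcdef
  have hcB : c ∈ B := by
    have h1 : z⁻¹ * b * z ∈ B := by
      have := (Subgroup.mem_normalizer_iff.mp (inv_mem hzN) b).mp hbB
      simpa using this
    exact mul_mem (inv_mem hbB) h1
  set cp := (c : Perm (Vertex m)) with hcp
  have hcapply : ∀ y, cp y = s₁ (r y) := by
    intro y
    have : cp = bp⁻¹ * (r⁻¹ * bp * r) := rfl
    rw [this, hs₁def]
    simp [Perm.mul_apply]
  have hcG : cp ∈ G := c.2
  -- the vertex u'
  set u' := r⁻¹ u with hu'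
  have hu'pre : IsPrefixV v u' := maps_subtree (hG (inv_mem hrG)) hrinvv hvu
  have hu'ne : u' ≠ u := by
    intro h
    have := congrArg r h
    rw [hu', Perm.apply_inv_self] at this
    exact hu this.symm
  have hu'len : u'.1 = u.1 := (hG (inv_mem hrG)).1 u
  have hnotw'u : ¬ IsPrefixV w' u := fun h => hw'v (prefix_antichain hw'len h hvu)
  have hcu' : cp u' = u := by
    rw [hcapply, hu', Perm.apply_inv_self]
    exact hs₁fix u hnotw'u
  have hcinvu : cp⁻¹ u = u' := by
    rw [← hcu', Perm.inv_apply_self]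
  -- the element t
  obtain ⟨t, htH, htN, htne⟩ := exists_mem_inf_normalizer hBfin _ (hinf u)
  have htr : (t : Perm (Vertex m)) ∈ rist G u := Subgroup.mem_subgroupOf.mp htH
  set tp := (t : Perm (Vertex m)) with htpdef
  have htfix : ∀ y, ¬ IsPrefixV u y → tp y = y := rist_fix htr
  have htG : tp ∈ G := t.2
  have htu : tp u = u := fixes_vertex (hG htG) htfix
  have htifix : ∀ y, ¬ IsPrefixV u y → tp⁻¹ y = y := by
    intro y hy
    conv_lhs => rw [← htfix y hy]
    rw [Perm.inv_apply_self]
  -- the element d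
  set d : ↥G := c⁻¹ * (t⁻¹ * c * t) with hddef
  have hdB : d ∈ B := by
    have h1 : t⁻¹ * c * t ∈ B := by
      have := (Subgroup.mem_normalizer_iff.mp (inv_mem htN) c).mp hcB
      simpa using this
    exact mul_mem (inv_mem hcB) h1
  set dp := (d : Perm (Vertex m)) with hdp
  set s₂ : Perm (Vertex m) := cp⁻¹ * tp⁻¹ * cp with hs₂def
  have hs₂fix : ∀ y, ¬ IsPrefixV u' y → s₂ y = y := by
    have h := conj_support (hG (inv_mem hcG)) htifix
    simpa [inv_inv, hcinvu, hs₂def] using h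
  have hdapply : ∀ y, dp y = s₂ (tp y) := by
    intro y
    have : dp = cp⁻¹ * (tp⁻¹ * cp * tp) := rfl
    rw [this, hs₂def]
    simp [Perm.mul_apply]
  have hdrist : dp ∈ rist G v := by
    refine Subgroup.mem_inf.mpr ⟨d.2, ?_⟩
    rw [mem_fixingSubgroup_iff (Perm (Vertex m))]
    intro y hy
    replace hy : ¬ IsPrefixV v y := hy
    have h1 : ¬ IsPrefixV u y := fun h => hy (prefix_trans hvu h)
    have h2 : ¬ IsPrefixV u' y := fun h => hy (prefix_trans hu'pre h)
    show dp y = y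
    rw [hdapply, htfix y h1]
    exact hs₂fix y h2
  have hdne : d ≠ 1 := by
    obtain ⟨x, hx⟩ : ∃ x, tp x ≠ x := by
      by_contra h; push_neg at h
      exact htne (Subtype.ext (Equiv.ext h))
    have hux : IsPrefixV u x := by
      by_contra h; exact hx (htfix x h)
    have h1 : IsPrefixV u (tp x) := maps_subtree (hG htG) htu hux
    have h2 : ¬ IsPrefixV u' (tp x) := fun h => hu'ne (prefix_antichain hu'len h h1)
    intro h
    apply hx
    have hd1 : dp x = x := by
      have : dp = 1 := by rw [hdp, h]; rfl
      rw [this]; rfl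
    rw [hdapply, hs₂fix _ h2] at hd1
    exact hd1
  exact ⟨d, hdB, hdrist, hdne⟩

end Main
/-- Let `G ≤ Aut T` be a weakly branch group, `B` a nontrivial basal subgroup of `G`, and `v`
a vertex of `T` moved by `B`. Then `st_G(v) ≤ N_G(B)` and `rist_G(v) ∩ B ≠ 1`. -/
theorem st_le_normalizer_of_basal (m : ℕ → ℕ) (hm : ∀ n, 2 ≤ m n)
    (G : Subgroup (Perm (Vertex m))) (hG : G ≤ treeAut m) (hwb : IsWeaklyBranch G)
    (B : Subgroup ↥G) (hB : IsBasal B) (hBne : B ≠ ⊥)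
    (v : Vertex m) (hv : ∃ b ∈ B, ((b : ↥G) : Perm (Vertex m)) v ≠ v) :
    (st G v).subgroupOf G ≤ Subgroup.normalizer (B : Set ↥G) ∧ (rist G v).subgroupOf G ⊓ B ≠ ⊥ := by
  obtain ⟨b, hbB, hbv⟩ := hv
  obtain ⟨d, hdB, hdrist, hdne⟩ := exists_basal_rist G hG hwb B hB.1 v b hbB hbv
  constructor
  · intro g hg
    have hgst : (g : Perm (Vertex m)) ∈ st G v := Subgroup.mem_subgroupOf.mp hg
    have hgv : (g : Perm (Vertex m)) v = v := by
      have h := (Subgroup.mem_inf.mp hgst).2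
      rw [MulAction.mem_stabilizer_iff] at h
      simpa [Equiv.Perm.smul_def] using h
    by_cases hcB : conjS g B = B
    · exact mem_normalizer_of_conjS_eq hcB
    · exfalso
      have hne : conjS g B ≠ conjS (1 : ↥G) B := by rwa [conjS_one]
      have hx : g * d * g⁻¹ ∈ conjS g B := by
        rw [mem_conjS]
        have e : g⁻¹ * (g * d * g⁻¹) * g = d := by group
        rwa [e]
      have hyB : b ∈ conjS (1 : ↥G) B := by rwa [conjS_one]
      have hcomm : (g * d * g⁻¹) * b = b * (g * d * g⁻¹) := hB.2.1 g 1 hne _ hx _ hyB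
      set gp := (g : Perm (Vertex m)) with hgp
      set dp := (d : Perm (Vertex m)) with hdp
      set bp := (b : Perm (Vertex m)) with hbp
      set d' : Perm (Vertex m) := gp * dp * gp⁻¹ with hd'
      have hcp : d' * bp = bp * d' := congrArg (Subtype.val) hcomm
      have hd'fixpre : ∀ y, ¬ IsPrefixV v y → d' y = y := by
        have h := conj_support (hG g.2) (rist_fix hdrist)
        simpa [hgv, ← hgp, ← hdp, ← hd'] using h
      have hdpne : dp ≠ 1 := fun h => hdne (Subtype.ext h)
      obtain ⟨x₀, hx₀⟩ : ∃ x₀, d' x₀ ≠ x₀ := by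
        by_contra h; push_neg at h
        apply hdpne
        have h1 : d' = 1 := Equiv.ext h
        rw [hd'] at h1
        have h2 := congrArg (fun f => gp⁻¹ * f * gp) h1
        simpa [mul_assoc] using h2
      have hvx₀ : IsPrefixV v x₀ := by
        by_contra h; exact hx₀ (hd'fixpre x₀ h)
      have hb1 : IsPrefixV (bp v) (bp x₀) := ((hG b.2).2 v x₀).mp hvx₀
      have hblen : (bp v).1 = v.1 := (hG b.2).1 v
      have h2 : ¬ IsPrefixV v (bp x₀) := fun h => hbv (prefix_antichain hblen hb1 h)
      have e1 : d' (bp x₀) = bp (d' x₀) := by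
        have := congrArg (fun f : Perm (Vertex m) => f x₀) hcp
        simpa [Perm.mul_apply] using this
      rw [hd'fixpre _ h2] at e1
      exact hx₀ (bp.injective e1.symm)
  · intro hbot
    have hmem : d ∈ (rist G v).subgroupOf G ⊓ B :=
      Subgroup.mem_inf.mpr ⟨Subgroup.mem_subgroupOf.mpr hdrist, hdB⟩
    rw [hbot] at hmem
    exact hdne (Subgroup.mem_bot.mp hmem)
end

section
/- Let T be a spherically homogeneous rooted tree, let G ≤ Aut T be a weakly branch group, and let Ḡ be the closure of G in the congruence topology on Aut T. Then Ḡ is weakly branch; moreover, for every vertex v of T, the stabilizer st_{Ḡ}(v) equals the closure of st_G(v) in the congruence topology, and the indices agree: |Ḡ : st_{Ḡ}(v)| = |G : st_G(v)|. -/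
open Equiv

variable {m : ℕ → ℕ}

theorem StL_conj {m : ℕ → ℕ} {k s : Perm (Vertex m)} (hk : k ∈ treeAut m) {n : ℕ}
    (hs : s ∈ StL (treeAut m) n) : k⁻¹ * s * k ∈ StL (treeAut m) n := by
  obtain ⟨hs1, hs2⟩ := Subgroup.mem_inf.mp hs
  refine Subgroup.mem_inf.mpr ⟨mul_mem (mul_mem (inv_mem hk) hs1) hk, ?_⟩
  rw [mem_fixingSubgroup_iff]
  intro u hu
  have hk' : (∀ v, (k v).1 = v.1) ∧ ∀ u v, IsPrefixV u v ↔ IsPrefixV (k u) (k v) := hk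
  have hku : (k u).1 = n := by rw [hk'.1 u]; exact hu
  have hfix := (mem_fixingSubgroup_iff (Perm (Vertex m))).mp hs2 (k u) hku
  simp only [Perm.smul_def, Perm.mul_apply] at *
  rw [hfix, ← Perm.mul_apply, inv_mul_cancel, Perm.one_apply]

/-- The closure of a subgroup `H ≤ Aut T` in the congruence topology on `Aut T`:
`H̄ = ⋂_{n ≥ 0} H · St_{Aut T}(n)`. -/
def congrClosure {m : ℕ → ℕ} (H : Subgroup (Perm (Vertex m))) (hH : H ≤ treeAut m) :
    Subgroup (Perm (Vertex m)) where
  carrier := {x | ∀ n : ℕ, ∃ h ∈ H, h⁻¹ * x ∈ StL (treeAut m) n}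
  one_mem' := fun n => ⟨1, H.one_mem, by simpa using (StL (treeAut m) n).one_mem⟩
  mul_mem' := by
    intro x y hx hy n
    obtain ⟨h, hh, hxs⟩ := hx n
    obtain ⟨k, hk, hys⟩ := hy n
    refine ⟨h * k, mul_mem hh hk, ?_⟩
    have heq : (h * k)⁻¹ * (x * y) = (k⁻¹ * (h⁻¹ * x) * k) * (k⁻¹ * y) := by group
    rw [heq]
    exact mul_mem (StL_conj (hH hk) hxs) hys
  inv_mem' := by
    intro x hx n
    obtain ⟨h, hh, hs⟩ := hx n
    refine ⟨h⁻¹, inv_mem hh, ?_⟩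
    have heq : (h⁻¹)⁻¹ * x⁻¹ = (h⁻¹)⁻¹ * (h⁻¹ * x)⁻¹ * h⁻¹ := by group
    rw [heq]
    exact StL_conj (inv_mem (hH hh)) (inv_mem hs)

lemma vertexEq {m : ℕ → ℕ} {a b : Vertex m} (h1 : a.1 = b.1)
    (h2 : ∀ i (ha : i < a.1) (hb : i < b.1), (a.2 ⟨i, ha⟩ : ℕ) = (b.2 ⟨i, hb⟩ : ℕ)) :
    a = b := by
  obtain ⟨n, f⟩ := a
  obtain ⟨n', g⟩ := b
  dsimp at h1 h2
  subst h1
  congr 1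
  funext i
  exact Fin.ext (by simpa using h2 i.1 i.2 i.2)

lemma stl_fix {m : ℕ → ℕ} (hm : ∀ n, 2 ≤ m n) {s : Perm (Vertex m)} {n : ℕ}
    (hs : s ∈ StL (treeAut m) n) {u : Vertex m} (hu : u.1 ≤ n) : s u = u := by
  obtain ⟨hs1, hs2⟩ := Subgroup.mem_inf.mp hs
  have hsa : (∀ v, (s v).1 = v.1) ∧ ∀ a b, IsPrefixV a b ↔ IsPrefixV (s a) (s b) := hs1
  let w : Vertex m := ⟨n, fun i => if h : (i : ℕ) < u.1 then u.2 ⟨i, h⟩ else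
    ⟨0, lt_of_lt_of_le (by norm_num) (hm i)⟩⟩
  have hpre : IsPrefixV u w := ⟨hu, fun i hiu hiv => by simp [w, dif_pos hiu]⟩
  have hww : s w = w := by
    have := (mem_fixingSubgroup_iff (Perm (Vertex m))).mp hs2 w rfl
    simpa using this
  have hpre2 : IsPrefixV (s u) w := by
    have := (hsa.2 u w).mp hpre
    rwa [hww] at this
  refine vertexEq (hsa.1 u) (fun i ha hb => ?_)
  have hin : i < w.1 := by
    show i < n
    have := hsa.1 u
    omega
  have e1 := hpre2.2 i ha hin
  have e2 := hpre.2 i hb hin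
  exact e1.trans e2.symm

lemma StL_mono {m : ℕ → ℕ} (hm : ∀ n, 2 ≤ m n) {k n : ℕ} (hkn : k ≤ n) :
    StL (treeAut m) n ≤ StL (treeAut m) k := by
  intro s hs
  refine Subgroup.mem_inf.mpr ⟨(Subgroup.mem_inf.mp hs).1, ?_⟩
  rw [mem_fixingSubgroup_iff]
  intro u hu
  have : u.1 ≤ n := le_trans (le_of_eq hu) hkn
  simpa [Perm.smul_def] using stl_fix hm hs this

lemma orbit_eq_level {m : ℕ → ℕ} (H : Subgroup (Perm (Vertex m))) (hH : H ≤ treeAut m)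
    (ht : LevelTransitive H) (v : Vertex m) :
    MulAction.orbit H v = {u : Vertex m | u.1 = v.1} := by
  ext u
  constructor
  · rintro ⟨g, rfl⟩
    have hg : (∀ w, ((g : Perm (Vertex m)) w).1 = w.1) ∧
        ∀ a b, IsPrefixV a b ↔ IsPrefixV ((g : Perm (Vertex m)) a) ((g : Perm (Vertex m)) b) :=
      hH g.2
    exact hg.1 v
  · intro hu
    obtain ⟨g, hg, hgv⟩ := ht v u hu.symm
    exact ⟨⟨g, hg⟩, hgv⟩

lemma relindex_eq_card_orbit {m : ℕ → ℕ} (H : Subgroup (Perm (Vertex m))) (v : Vertex m) :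
    (st H v).relIndex H = (MulAction.orbit H v).ncard := by
  rw [Subgroup.relIndex, ← MulAction.index_stabilizer]
  congr 1
  ext g
  simp only [Subgroup.mem_subgroupOf, st, Subgroup.mem_inf, MulAction.mem_stabilizer_iff,
    SetLike.coe_mem, true_and]
  rfl

/-- Let `G ≤ Aut T` be a weakly branch group and `Ḡ` its closure in the congruence topology on
`Aut T`. Then `Ḡ` is weakly branch; moreover, for every vertex `v`, the stabilizer `st_Ḡ(v)`
equals the congruence closure of `st_G(v)`, and the indices agree:
`|Ḡ : st_Ḡ(v)| = |G : st_G(v)|`. -/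
theorem congruence_closure_weakly_branch (m : ℕ → ℕ) (hm : ∀ n, 2 ≤ m n)
    (G : Subgroup (Perm (Vertex m))) (hG : G ≤ treeAut m) (hwb : IsWeaklyBranch G) :
    congrClosure G hG ≤ treeAut m ∧ IsWeaklyBranch (congrClosure G hG) ∧
    (∀ v : Vertex m,
      st (congrClosure G hG) v = congrClosure (st G v) (inf_le_left.trans hG)) ∧
    ∀ v : Vertex m,
      (st (congrClosure G hG) v).relIndex (congrClosure G hG) = (st G v).relIndex G := by
  have hle : congrClosure G hG ≤ treeAut m := by
    intro x hx
    obtain ⟨h, hh, hs⟩ := hx 0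
    have hx' : x = h * (h⁻¹ * x) := by group
    rw [hx']
    exact mul_mem (hG hh) (Subgroup.mem_inf.mp hs).1
  have hsub : G ≤ congrClosure G hG := by
    intro g hg n
    refine ⟨g, hg, ?_⟩
    simpa using (StL (treeAut m) n).one_mem
  have hlt : LevelTransitive (congrClosure G hG) := by
    intro u v huv
    obtain ⟨g, hg, hgu⟩ := hwb.1 u v huv
    exact ⟨g, hsub hg, hgu⟩
  have hst : ∀ v : Vertex m,
      st (congrClosure G hG) v = congrClosure (st G v) (inf_le_left.trans hG) := by
    intro v
    ext x
    constructor
    · intro hx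
      obtain ⟨hx1, hx2⟩ := Subgroup.mem_inf.mp hx
      intro n
      obtain ⟨h, hh, hs⟩ := hx1 (max n v.1)
      have hsv : (h⁻¹ * x) v = v := stl_fix hm hs (le_max_right n v.1)
      have hxv : x v = v := hx2
      have hhv : h v = v := by
        have : h ((h⁻¹ * x) v) = x v := by simp [Perm.mul_apply]
        rw [hsv, hxv] at this
        exact this
      refine ⟨h, Subgroup.mem_inf.mpr ⟨hh, hhv⟩, StL_mono hm (le_max_left n v.1) hs⟩
    · intro hx
      refine Subgroup.mem_inf.mpr ⟨fun n => ?_, ?_⟩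
      · obtain ⟨h, hh, hs⟩ := hx n
        exact ⟨h, (Subgroup.mem_inf.mp hh).1, hs⟩
      · obtain ⟨h, hh, hs⟩ := hx v.1
        have hsv : (h⁻¹ * x) v = v := stl_fix hm hs le_rfl
        have hhv : h v = v := (Subgroup.mem_inf.mp hh).2
        show x • v = v
        have : h ((h⁻¹ * x) v) = x v := by simp [Perm.mul_apply]
        rw [hsv, hhv] at this
        exact this.symm
  refine ⟨hle, ⟨hlt, fun v => ?_⟩, hst, fun v => ?_⟩
  · have hrle : rist G v ≤ rist (congrClosure G hG) v :=
      inf_le_inf_right _ hsub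
    have := hwb.2 v
    exact Infinite.of_injective (Subgroup.inclusion hrle) (Subgroup.inclusion_injective hrle)
  · rw [relindex_eq_card_orbit, relindex_eq_card_orbit,
      orbit_eq_level _ hle hlt, orbit_eq_level _ hG hwb.1]
end
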